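/- arXiv:2002.08120 — 2 statements merged into one kernel-verified Lean document; each statement's English description precedes it below -/
import Mathlib

section
/- If n = 2^k · p^ℓ where k and ℓ are positive integers and p is an odd prime number, then Cond(V_n) = φ(n)·√(2(1 − 1/p)). -/
open Matrix Polynomial BigOperators

/-- The Frobenius norm of a square complex matrix. -/
noncomputable def frobNorm {k : ℕ} (A : Matrix (Fin k) (Fin k) ℂ) : ℝ :=
  Real.sqrt (∑ i, ∑ j, ‖A i j‖ ^ 2)

/-- The condition number `Cond(A) = ‖A‖ ‖A⁻¹‖` (Frobenius norm). -/
noncomputable def condNum {k : ℕ} (A : Matrix (Fin k) (Fin k) ℂ) : ℝ :=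
  frobNorm A * frobNorm A⁻¹

/-- The Vandermonde matrix with (i,j) entry `ζ i ^ j` (0-indexed). -/
def vand {m : ℕ} (ζ : Fin m → ℂ) : Matrix (Fin m) (Fin m) ℂ :=
  Matrix.of fun i j => ζ i ^ (j : ℕ)

/-- The radical of `n`: the product of the distinct prime factors of `n`. -/
def rad (n : ℕ) : ℕ := ∏ p ∈ n.primeFactors, p

/-- The Ramanujan sum `c_n(t)`: the sum of the `t`-th powers of the
primitive `n`-th roots of unity in `ℂ`. -/
noncomputable def ram (n : ℕ) (t : ℤ) : ℂ := ∑ z ∈ primitiveRoots n ℂ, z ^ t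

/-!
Put `ω j = -ζ j ^ q`. If `ζ j ^ (p * q) = -1` with `p` odd and `ζ j ^ q ≠ -1`, then `ω j` is a
`p`-th root of unity other than `1`, and the inverse of `V` is explicit:
`(V⁻¹) t j = ζ j ^ (-t) * (1 - ω j ^ (t / q + 1)) / (p q)`. Writing `t = q a + b`, the entry
`(V V⁻¹) i j` factors into a geometric sum in `ζ i / ζ j` over `b < q` and a sum over `a < p - 1`
which is `p` or `0` according as `ω i = ω j` or not. All nodes lie on the unit circle, so
`‖V‖ = m`, while each column of `V⁻¹` has squared norm
`q ∑ₐ |1 - ω ^ (a + 1)|² / (p q)² = 2 / (p q)`; with `m = q (p - 1)` this gives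
`‖V⁻¹‖² = 2 (1 - 1 / p)`.

For `n = 2 ^ k p ^ ℓ` take `q = 2 ^ (k - 1) p ^ (ℓ - 1)`: then `n = 2 p q`, `φ n = q (p - 1)`, and a
primitive `n`-th root `ζ` has `ζ ^ (p q) = -1` and `ζ ^ q ≠ -1`.
-/

open Finset

theorem geom_sum_eq_zero_of_pow_eq_one {K : Type*} [Field K] {x : K} {n : ℕ} (hx : x ≠ 1)
    (hn : x ^ n = 1) : ∑ a ∈ range n, x ^ a = 0 := by
  rw [geom_sum_eq hx, hn, sub_self, zero_div]

theorem sum_range_pred_div_pow_mul_one_sub_pow {K : Type*} [Field K] [DecidableEq K] {p : ℕ}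
    {x y : K} (hx : x ^ p = 1) (hy : y ^ p = 1) (hx1 : x ≠ 1) :
    ∑ a ∈ range (p - 1), (x / y) ^ a * (1 - y ^ (a + 1)) = if x = y then (p : K) else 0 := by
  cases p with
  | zero => simp
  | succ p =>
  have hy0 : y ≠ 0 := by rintro rfl; simp at hy
  have hfull : ∑ a ∈ range p, (x / y) ^ a * (1 - y ^ (a + 1)) =
      ∑ a ∈ range (p + 1), (x / y) ^ a * (1 - y ^ (a + 1)) := by
    rw [sum_range_succ, hy, sub_self, mul_zero, add_zero]
  have hterm : ∀ a, (x / y) ^ a * (1 - y ^ (a + 1)) = (x / y) ^ a - y * x ^ a := by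
    intro a; rw [div_pow]; field_simp; ring
  rw [Nat.add_sub_cancel, hfull, sum_congr rfl fun a _ => hterm a, sum_sub_distrib, ← mul_sum,
    geom_sum_eq_zero_of_pow_eq_one hx1 hx, mul_zero, sub_zero]
  split_ifs with hxy
  · simp [hxy, hy0]
  · exact geom_sum_eq_zero_of_pow_eq_one (by rwa [Ne, div_eq_one_iff_eq hy0])
      (by rw [div_pow, hx, hy, div_one])

theorem sum_range_pred_one_sub_pow {K : Type*} [Field K] {p : ℕ} {x : K} (hx : x ^ p = 1)
    (hx1 : x ≠ 1) : ∑ a ∈ range (p - 1), (1 - x ^ (a + 1)) = p := by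
  classical
  rcases Nat.eq_zero_or_pos p with rfl | hp
  · simp
  have hx0 : x ≠ 0 := by rintro rfl; simp [hp.ne'] at hx
  simpa [hx0] using sum_range_pred_div_pow_mul_one_sub_pow hx hx hx1

theorem sum_range_pred_norm_one_sub_pow_sq {p : ℕ} {ω : ℂ} (hω : ω ^ p = 1) (hω1 : ω ≠ 1) :
    ∑ a ∈ range (p - 1), ‖1 - ω ^ (a + 1)‖ ^ 2 = 2 * p := by
  rcases Nat.eq_zero_or_pos p with rfl | hp
  · simp
  have hnorm : ‖ω‖ = 1 := Complex.norm_eq_one_of_pow_eq_one hω hp.ne'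
  have hterm : ∀ a, (‖1 - ω ^ (a + 1)‖ ^ 2 : ℂ) = (1 - ω ^ (a + 1)) + (1 - ω⁻¹ ^ (a + 1)) := by
    intro a
    have hω0 : ω ≠ 0 := by rintro rfl; simp at hnorm
    rw [← Complex.mul_conj', map_sub, map_one, map_pow, ← Complex.inv_eq_conj hnorm, inv_pow]
    field_simp
    ring
  apply Complex.ofReal_injective
  push_cast
  rw [sum_congr rfl fun a _ => hterm a, sum_add_distrib, sum_range_pred_one_sub_pow hω hω1,
    sum_range_pred_one_sub_pow (by rw [inv_pow, hω, inv_one]) (by rwa [Ne, inv_eq_one])]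
  ring

theorem sum_range_mul_pow_mul_apply_div {R : Type*} [CommSemiring R] (μ : R) (g : ℕ → R)
    {q : ℕ} (hq : 0 < q) (N : ℕ) :
    ∑ t ∈ range (q * N), μ ^ t * g (t / q) =
      (∑ a ∈ range N, (μ ^ q) ^ a * g a) * ∑ b ∈ range q, μ ^ b := by
  induction N with
  | zero => simp
  | succ N ih =>
    rw [Nat.mul_succ, sum_range_add, ih, sum_range_succ, add_mul, mul_sum, mul_sum]
    congr 1
    refine sum_congr rfl fun b hb => ?_
    rw [Nat.mul_add_div hq, Nat.div_eq_of_lt (mem_range.1 hb), add_zero, pow_add, pow_mul]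
    ring

theorem neg_pow_pow_eq_one_of_pow_mul_eq_neg_one {R : Type*} [Monoid R] [HasDistribNeg R]
    {z : R} {p q : ℕ} (hp : Odd p) (hz : z ^ (p * q) = -1) : (-z ^ q) ^ p = 1 := by
  rw [hp.neg_pow, ← pow_mul, mul_comm, hz, neg_neg]

theorem Complex.norm_eq_one_of_pow_eq_neg_one {z : ℂ} {n : ℕ} (h : z ^ n = -1) : ‖z‖ = 1 := by
  rcases eq_or_ne n 0 with rfl | hn
  · norm_num at h
  exact Complex.norm_eq_one_of_pow_eq_one (by rw [pow_mul, h, neg_one_sq] : z ^ (n * 2) = 1)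
    (by omega)

theorem frobNorm_vand_of_norm_eq_one {m : ℕ} {ζ : Fin m → ℂ} (h : ∀ i, ‖ζ i‖ = 1) :
    frobNorm (vand ζ) = m := by
  simp [frobNorm, vand, h]

/-- Column `j` holds the coefficients of the Lagrange interpolation polynomial of the node
`ζ j`. -/
noncomputable def vandInv {m : ℕ} (p q : ℕ) (ζ : Fin m → ℂ) : Matrix (Fin m) (Fin m) ℂ :=
  of fun t j => (ζ j ^ (t : ℕ))⁻¹ * (1 - (-ζ j ^ q) ^ ((t : ℕ) / q + 1)) / (p * q)

section NegOneRoots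

variable {m p q : ℕ} {ζ : Fin m → ℂ}

theorem vand_mul_vandInv (hm : m = q * (p - 1)) (hp : Odd p) (hq : 0 < q)
    (hinj : Function.Injective ζ) (hζ : ∀ i, ζ i ^ (p * q) = -1) (hζq : ∀ i, ζ i ^ q ≠ -1) :
    vand ζ * vandInv p q ζ = 1 := by
  ext i j
  have hζ0 : ∀ i, ζ i ≠ 0 := fun i h => by
    simpa [h, (Nat.mul_pos hp.pos hq).ne'] using hζ i
  have hω := fun i => neg_pow_pow_eq_one_of_pow_mul_eq_neg_one hp (hζ i)
  have hω1 : ∀ i, -ζ i ^ q ≠ 1 := fun i h => hζq i (by rw [← h, neg_neg])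
  set μ := ζ i / ζ j with hμ
  have hentry : (vand ζ * vandInv p q ζ) i j =
      (∑ a ∈ range (p - 1), (μ ^ q) ^ a * (1 - (-ζ j ^ q) ^ (a + 1))) *
        (∑ b ∈ range q, μ ^ b) / (p * q) := by
    calc (vand ζ * vandInv p q ζ) i j
        = ∑ t : Fin m, μ ^ (t : ℕ) * (1 - (-ζ j ^ q) ^ ((t : ℕ) / q + 1)) / (p * q) := by
          rw [mul_apply]
          refine sum_congr rfl fun t _ => ?_
          simp only [vand, vandInv, of_apply, hμ, div_pow]
          ring
      _ = _ := by
          rw [Fin.sum_univ_eq_sum_range (fun t => μ ^ t * (1 - (-ζ j ^ q) ^ (t / q + 1)) / (p * q)),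
            ← sum_div, hm, sum_range_mul_pow_mul_apply_div μ (fun a => 1 - (-ζ j ^ q) ^ (a + 1)) hq]
  have hμq : μ ^ q = (-ζ i ^ q) / (-ζ j ^ q) := by rw [div_pow, neg_div_neg_eq]
  rw [hentry, hμq, sum_range_pred_div_pow_mul_one_sub_pow (hω i) (hω j) (hω1 i), one_apply]
  by_cases hij : i = j
  · have hp0 : (p : ℂ) ≠ 0 := Nat.cast_ne_zero.mpr hp.pos.ne'
    have hq0 : (q : ℂ) ≠ 0 := Nat.cast_ne_zero.mpr hq.ne'
    simp [hμ, hij, hζ0, hp0, hq0]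
  rw [if_neg hij]
  split_ifs with hωij
  · have hμ1 : μ ≠ 1 := fun h => hij (hinj ((div_eq_one_iff_eq (hζ0 j)).mp h))
    have hμq1 : μ ^ q = 1 := by rw [hμq, hωij, div_self (neg_ne_zero.mpr (pow_ne_zero q (hζ0 j)))]
    rw [geom_sum_eq_zero_of_pow_eq_one hμ1 hμq1, mul_zero, zero_div]
  · simp

theorem frobNorm_vandInv (hm : m = q * (p - 1)) (hp : Odd p) (hq : 0 < q)
    (hζ : ∀ i, ζ i ^ (p * q) = -1) (hζq : ∀ i, ζ i ^ q ≠ -1) :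
    frobNorm (vandInv p q ζ) = √(2 * (1 - 1 / p)) := by
  have hp0 : (p : ℝ) ≠ 0 := Nat.cast_ne_zero.mpr hp.pos.ne'
  have hq0 : (q : ℝ) ≠ 0 := Nat.cast_ne_zero.mpr hq.ne'
  have hcol : ∀ j, ∑ t, ‖vandInv p q ζ t j‖ ^ 2 = 2 / (p * q) := by
    intro j
    have hnorm := Complex.norm_eq_one_of_pow_eq_neg_one (hζ j)
    set g : ℕ → ℝ := fun a => ‖1 - (-ζ j ^ q) ^ (a + 1)‖ ^ 2 / (p * q) ^ 2
    calc ∑ t, ‖vandInv p q ζ t j‖ ^ 2 = ∑ t : Fin m, 1 ^ (t : ℕ) * g (t / q) := by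
          refine sum_congr rfl fun t _ => ?_
          simp [vandInv, g, hnorm, div_pow]
      _ = (∑ a ∈ range (p - 1), g a) * q := by
          rw [Fin.sum_univ_eq_sum_range (fun t => 1 ^ t * g (t / q)), hm,
            sum_range_mul_pow_mul_apply_div (1 : ℝ) g hq]
          simp
      _ = 2 / (p * q) := by
          rw [← sum_div, sum_range_pred_norm_one_sub_pow_sq
            (neg_pow_pow_eq_one_of_pow_mul_eq_neg_one hp (hζ j))
            (fun h => hζq j (by rw [← h, neg_neg]))]
          field_simp
  rw [frobNorm, sum_comm, sum_congr rfl fun j _ => hcol j, sum_const, card_univ,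
    Fintype.card_fin, nsmul_eq_mul, hm, Nat.cast_mul, Nat.cast_pred hp.pos]
  field_simp

theorem condNum_vand_of_pow_mul_eq_neg_one (hm : m = q * (p - 1)) (hp : Odd p) (hq : 0 < q)
    (hinj : Function.Injective ζ) (hζ : ∀ i, ζ i ^ (p * q) = -1) (hζq : ∀ i, ζ i ^ q ≠ -1) :
    condNum (vand ζ) = m * √(2 * (1 - 1 / p)) := by
  rw [condNum, inv_eq_right_inv (vand_mul_vandInv hm hp hq hinj hζ hζq),
    frobNorm_vand_of_norm_eq_one fun i => Complex.norm_eq_one_of_pow_eq_neg_one (hζ i),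
    frobNorm_vandInv hm hp hq hζ hζq]

end NegOneRoots

theorem IsPrimitiveRoot.pow_eq_neg_one {R : Type*} [CommRing R] [IsDomain R] {ζ : R} {N : ℕ}
    (h : IsPrimitiveRoot ζ (2 * N)) (hN : N ≠ 0) : ζ ^ N = -1 := by
  have h2 := h.pow_of_dvd hN (dvd_mul_left N 2)
  rw [Nat.mul_div_cancel _ (Nat.pos_of_ne_zero hN)] at h2
  exact h2.eq_neg_one_of_two_right

theorem IsPrimitiveRoot.pow_ne_neg_one {R : Type*} [CommRing R] {ζ : R} {M N : ℕ}
    (h : IsPrimitiveRoot ζ (2 * N)) (hM : M ≠ 0) (hMN : M < N) : ζ ^ M ≠ -1 := fun hζM =>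
  h.pow_ne_one_of_pos_of_lt (by omega : 2 * M ≠ 0) (by omega)
    (by rw [mul_comm, pow_mul, hζM, neg_one_sq])

theorem Nat.totient_two_pow_mul_prime_pow {p k l : ℕ} (hp : p.Prime) (hp2 : p ≠ 2) (hk : 0 < k)
    (hl : 0 < l) : (2 ^ k * p ^ l).totient = 2 ^ (k - 1) * p ^ (l - 1) * (p - 1) := by
  have hcop : Nat.Coprime (2 ^ k) (p ^ l) :=
    .pow _ _ ((Nat.coprime_primes Nat.prime_two hp).mpr hp2.symm)
  rw [Nat.totient_mul hcop, Nat.totient_prime_pow Nat.prime_two hk, Nat.totient_prime_pow hp hl]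
  ring

/-- If `n = 2 ^ k * p ^ ℓ` with `p` an odd prime and `k, ℓ ≥ 1`,
then `Cond(V_n) = φ(n) * √(2 * (1 - 1/p))`. -/
theorem cond_vand_two_pow_mul_prime_pow (p k l : ℕ) (hp : p.Prime) (hpodd : Odd p)
    (hk : 0 < k) (hl : 0 < l)
    (ζ : Fin (2 ^ k * p ^ l).totient → ℂ) (hζinj : Function.Injective ζ)
    (hζ : ∀ i, IsPrimitiveRoot (ζ i) (2 ^ k * p ^ l)) :
    condNum (vand ζ) =
      ((2 ^ k * p ^ l).totient : ℝ) * Real.sqrt (2 * (1 - 1 / (p : ℝ))) := by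
  set q := 2 ^ (k - 1) * p ^ (l - 1)
  have hq : 0 < q := Nat.mul_pos (by positivity) (pow_pos hp.pos _)
  have hn : 2 ^ k * p ^ l = 2 * (p * q) := by
    obtain ⟨k, rfl⟩ := Nat.exists_eq_succ_of_ne_zero hk.ne'
    obtain ⟨l, rfl⟩ := Nat.exists_eq_succ_of_ne_zero hl.ne'
    simp only [q, Nat.succ_sub_one, pow_succ]
    ring
  have hp2 : p ≠ 2 := by rintro rfl; exact Nat.not_odd_iff_even.mpr even_two hpodd
  refine condNum_vand_of_pow_mul_eq_neg_one
    ((Nat.totient_two_pow_mul_prime_pow hp hp2 hk hl).trans (by ring)) hpodd hq hζinj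
    (fun i => ((hn ▸ hζ i).pow_eq_neg_one (Nat.mul_pos hp.pos hq).ne'))
    (fun i => (hn ▸ hζ i).pow_ne_neg_one hq.ne' ((Nat.lt_mul_iff_one_lt_left hq).mpr hp.one_lt))
end

section
/- For every positive integer n, writing n′ := rad(n), m := φ(n), m′ := φ(n′), and h := n/n′, the characteristic polynomials satisfy det(G_n − x·Id_m) = h^m · det(G_{n′} − (x/h)·Id_{m′})^h as polynomials in x. -/
/-!
The Gram matrix of the Vandermonde matrix at the primitive `n`-th roots of unity is the Toeplitz
matrix of Ramanujan sums: `G_n j j' = c_n (j' - j)`. With `h = n / rad n`, a complex number `z`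
is a primitive `n`-th root of unity iff `z ^ h` is a primitive `rad n`-th one, so summing over
the fibres of `z ↦ z ^ h` (each the full set of `h`-th roots of a point) gives `c_n t = 0` unless
`h ∣ t`, and `c_n (h s) = h * c_{rad n} s`. Ordering the indices as `j = r + h * q` with `r < h`
therefore splits `G_n` into `h` diagonal blocks `h • G_{rad n}`, and `φ n = h * φ (rad n)`.
-/

open Matrix Polynomial BigOperators

lemma rad_dvd (n : ℕ) : rad n ∣ n := Nat.prod_primeFactors_dvd n

lemma rad_pos (n : ℕ) : 0 < rad n :=
  Finset.prod_pos fun _ hp => (Nat.prime_of_mem_primeFactors hp).pos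

lemma primeFactors_rad (n : ℕ) : (rad n).primeFactors = n.primeFactors :=
  Nat.primeFactors_prod fun _ hp => Nat.prime_of_mem_primeFactors hp

lemma div_rad_pos {n : ℕ} (hn : 0 < n) : 0 < n / rad n :=
  Nat.div_pos (Nat.le_of_dvd hn (rad_dvd n)) (rad_pos n)

lemma totient_eq_totient_rad_mul (n : ℕ) : n.totient = (rad n).totient * (n / rad n) := by
  rw [Nat.totient_eq_div_primeFactors_mul n, Nat.totient_eq_div_primeFactors_mul (rad n),
    primeFactors_rad, ← rad, Nat.div_self (rad_pos n), one_mul, mul_comm]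

theorem isPrimitiveRoot_iff_pow_div_rad {M : Type*} [CommMonoid M] {z : M} {n : ℕ}
    (hn : 0 < n) : IsPrimitiveRoot z n ↔ IsPrimitiveRoot (z ^ (n / rad n)) (rad n) := by
  have hn_eq : n = n / rad n * rad n := (Nat.div_mul_cancel (rad_dvd n)).symm
  refine ⟨fun hz => hz.pow hn hn_eq, fun hz => IsPrimitiveRoot.iff_orderOf.2 ?_⟩
  refine orderOf_eq_of_pow_and_pow_div_prime hn ?_ fun p hp hpn => ?_
  · rw [hn_eq, pow_mul, hz.pow_eq_one]
  · have hp_rad : p ∣ rad n :=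
      Finset.dvd_prod_of_mem _ (Nat.mem_primeFactors.2 ⟨hp, hpn, hn.ne'⟩)
    have hdiv : n / p = n / rad n * (rad n / p) := by
      rw [← Nat.mul_div_assoc _ hp_rad, ← hn_eq]
    rw [hdiv, pow_mul]
    exact hz.pow_ne_one_of_pos_of_lt (Nat.div_pos (Nat.le_of_dvd (rad_pos n) hp_rad) hp.pos).ne'
      (Nat.div_lt_self (rad_pos n) hp.one_lt)

section nthRoots

variable {R : Type*} [Field R] {ω : R} {h : ℕ}

theorem IsPrimitiveRoot.card_nthRootsFinset_of_pow_eq (hω : IsPrimitiveRoot ω h) {α a : R}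
    (hα : α ^ h = a) (ha : a ≠ 0) : (nthRootsFinset h a).card = h := by
  classical
  rw [nthRootsFinset_def, Multiset.toFinset_card_of_nodup (hω.nthRoots_nodup ha),
    hω.card_nthRoots, if_pos ⟨α, hα⟩]

/-- Multiplication by `ω` permutes the `h`-th roots of `a`, so multiplying the sum by
`ω ^ t ≠ 1` leaves it unchanged. -/
theorem IsPrimitiveRoot.sum_nthRootsFinset_zpow_eq_zero (hω : IsPrimitiveRoot ω h) (a : R)
    {t : ℤ} (ht : ¬ (h : ℤ) ∣ t) : ∑ z ∈ nthRootsFinset h a, z ^ t = 0 := by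
  rcases h.eq_zero_or_pos with rfl | hh
  · simp [nthRootsFinset_zero]
  have hω0 : ω ≠ 0 := hω.ne_zero hh.ne'
  have hmem : ∀ c : R, c ^ h = 1 → ∀ z ∈ nthRootsFinset h a, c * z ∈ nthRootsFinset h a := by
    intro c hc z hz
    rw [Polynomial.mem_nthRootsFinset hh] at hz ⊢
    rw [mul_pow, hc, one_mul, hz]
  have hfix : ω ^ t * ∑ z ∈ nthRootsFinset h a, z ^ t = ∑ z ∈ nthRootsFinset h a, z ^ t := by
    rw [Finset.mul_sum]
    refine Finset.sum_nbij' (ω * ·) (ω⁻¹ * ·) (hmem ω hω.pow_eq_one)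
      (hmem ω⁻¹ (by rw [inv_pow, hω.pow_eq_one, inv_one])) (fun z _ => by simp [hω0])
      (fun z _ => by simp [hω0]) (fun z _ => (mul_zpow ω z t).symm)
  have hne : ω ^ t ≠ 1 := fun h1 => ht ((hω.zpow_eq_one_iff_dvd t).1 h1)
  exact (mul_left_eq_self₀.1 hfix).resolve_left hne

theorem IsPrimitiveRoot.sum_nthRootsFinset_zpow_mul (hω : IsPrimitiveRoot ω h) {α a : R}
    (hα : α ^ h = a) (ha : a ≠ 0) (s : ℤ) :
    ∑ z ∈ nthRootsFinset h a, z ^ ((h : ℤ) * s) = h * a ^ s := by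
  rcases h.eq_zero_or_pos with rfl | hh
  · simp [nthRootsFinset_zero]
  have hz : ∀ z ∈ nthRootsFinset h a, z ^ ((h : ℤ) * s) = a ^ s := fun z hz => by
    rw [_root_.zpow_mul, zpow_natCast, (Polynomial.mem_nthRootsFinset hh a).1 hz]
  rw [Finset.sum_congr rfl hz, Finset.sum_const, hω.card_nthRootsFinset_of_pow_eq hα ha,
    nsmul_eq_mul]

end nthRoots

theorem sum_primitiveRoots_eq_sum_sum_nthRootsFinset {R M : Type*} [CommRing R] [IsDomain R]
    [AddCommMonoid M] {n : ℕ} (hn : 0 < n) (f : R → M) :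
    ∑ z ∈ primitiveRoots n R, f z =
      ∑ w ∈ primitiveRoots (rad n) R, ∑ z ∈ nthRootsFinset (n / rad n) w, f z := by
  classical
  rw [← Finset.sum_fiberwise_of_maps_to (g := (· ^ (n / rad n))) fun z hz =>
    (mem_primitiveRoots (rad_pos n)).2
      ((isPrimitiveRoot_iff_pow_div_rad hn).1 ((mem_primitiveRoots hn).1 hz))]
  refine Finset.sum_congr rfl fun w hw => Finset.sum_congr (Finset.ext fun z => ?_) fun _ _ => rfl
  rw [Finset.mem_filter, Polynomial.mem_nthRootsFinset (div_rad_pos hn), mem_primitiveRoots hn,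
    isPrimitiveRoot_iff_pow_div_rad hn]
  exact ⟨And.right, fun hz => ⟨hz ▸ (mem_primitiveRoots (rad_pos n)).1 hw, hz⟩⟩

theorem ram_eq_zero_of_not_dvd {n : ℕ} (hn : 0 < n) {t : ℤ}
    (ht : ¬ ((n / rad n : ℕ) : ℤ) ∣ t) : ram n t = 0 := by
  have hω := Complex.isPrimitiveRoot_exp (n / rad n) (div_rad_pos hn).ne'
  rw [ram, sum_primitiveRoots_eq_sum_sum_nthRootsFinset hn]
  exact Finset.sum_eq_zero fun w _ => hω.sum_nthRootsFinset_zpow_eq_zero w ht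

theorem ram_div_rad_mul {n : ℕ} (hn : 0 < n) (s : ℤ) :
    ram n ((n / rad n : ℕ) * s) = (n / rad n : ℕ) * ram (rad n) s := by
  have hω := Complex.isPrimitiveRoot_exp (n / rad n) (div_rad_pos hn).ne'
  rw [ram, ram, sum_primitiveRoots_eq_sum_sum_nthRootsFinset hn, Finset.mul_sum]
  refine Finset.sum_congr rfl fun w hw => ?_
  have hw0 : w ≠ 0 := ((mem_primitiveRoots (rad_pos n)).1 hw).ne_zero (rad_pos n).ne'
  obtain ⟨α, hα⟩ := IsAlgClosed.exists_pow_nat_eq w (div_rad_pos hn)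
  exact hω.sum_nthRootsFinset_zpow_mul hα hw0 s

section Gram

variable {n : ℕ} {ζ : Fin n.totient → ℂ}

theorem sum_comp_eq_sum_primitiveRoots {M : Type*} [AddCommMonoid M] (hn : 0 < n)
    (hinj : Function.Injective ζ) (hζ : ∀ i, IsPrimitiveRoot (ζ i) n) (f : ℂ → M) :
    ∑ i, f (ζ i) = ∑ z ∈ primitiveRoots n ℂ, f z := by
  classical
  have himage : Finset.univ.image ζ = primitiveRoots n ℂ := by
    refine Finset.eq_of_subset_of_card_le (fun z hz => ?_) ?_
    · obtain ⟨i, -, rfl⟩ := Finset.mem_image.1 hz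
      exact (mem_primitiveRoots hn).2 (hζ i)
    · rw [Finset.card_image_of_injective _ hinj, Finset.card_univ, Fintype.card_fin,
        (Complex.isPrimitiveRoot_exp n hn.ne').card_primitiveRoots]
  rw [← himage, Finset.sum_image fun i _ j _ hij => hinj hij]

theorem gram_vand_apply (hn : 0 < n) (hinj : Function.Injective ζ)
    (hζ : ∀ i, IsPrimitiveRoot (ζ i) n) (j j' : Fin n.totient) :
    ((vand ζ)ᴴ * vand ζ) j j' = ram n ((j' : ℕ) - (j : ℕ) : ℤ) := by
  rw [ram, ← sum_comp_eq_sum_primitiveRoots hn hinj hζ, Matrix.mul_apply]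
  refine Finset.sum_congr rfl fun i _ => ?_
  have hne : ζ i ≠ 0 := (hζ i).ne_zero hn.ne'
  have hstar : star (ζ i) = (ζ i)⁻¹ :=
    (Complex.inv_eq_conj (Complex.norm_eq_one_of_pow_eq_one (hζ i).pow_eq_one hn.ne')).symm
  simp only [Matrix.conjTranspose_apply, vand, Matrix.of_apply, star_pow, hstar]
  rw [zpow_sub₀ hne, zpow_natCast, zpow_natCast, div_eq_mul_inv, inv_pow, mul_comm]

end Gram

def totientRadEquiv (n : ℕ) : Fin (rad n).totient × Fin (n / rad n) ≃ Fin n.totient :=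
  finProdFinEquiv.trans (finCongr (totient_eq_totient_rad_mul n).symm)

lemma totientRadEquiv_apply_val (n : ℕ) (q : Fin (rad n).totient) (r : Fin (n / rad n)) :
    (totientRadEquiv n (q, r) : ℕ) = r + n / rad n * q := by
  simp [totientRadEquiv]

lemma Fin.eq_of_intCast_dvd_sub {h : ℕ} {r r' : Fin h} (hdvd : (h : ℤ) ∣ (r' : ℕ) - (r : ℕ)) :
    r = r' := by
  have hlt : ((r' : ℕ) - (r : ℕ) : ℤ).natAbs < (h : ℤ).natAbs := by omega
  have := Int.eq_zero_of_dvd_of_natAbs_lt_natAbs hdvd hlt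
  exact Fin.ext (by omega)

theorem gram_vand_submatrix_totientRadEquiv {n : ℕ} (hn : 0 < n) {ζ : Fin n.totient → ℂ}
    (hζinj : Function.Injective ζ) (hζ : ∀ i, IsPrimitiveRoot (ζ i) n)
    {ξ : Fin (rad n).totient → ℂ} (hξinj : Function.Injective ξ)
    (hξ : ∀ i, IsPrimitiveRoot (ξ i) (rad n)) :
    ((vand ζ)ᴴ * vand ζ).submatrix (totientRadEquiv n) (totientRadEquiv n) =
      blockDiagonal fun _ : Fin (n / rad n) => ((n / rad n : ℕ) : ℂ) • ((vand ξ)ᴴ * vand ξ) := by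
  ext ⟨q, r⟩ ⟨q', r'⟩
  have harg : (((r' + n / rad n * q' : ℕ) : ℤ) - ((r + n / rad n * q : ℕ) : ℤ)) =
      ((r' : ℕ) - (r : ℕ) : ℤ) + (n / rad n : ℕ) * ((q' : ℕ) - (q : ℕ) : ℤ) := by
    push_cast; ring
  rw [Matrix.submatrix_apply, Matrix.blockDiagonal_apply, gram_vand_apply hn hζinj hζ,
    totientRadEquiv_apply_val, totientRadEquiv_apply_val, harg]
  split_ifs with hr
  · obtain rfl : r = r' := hr
    rw [sub_self, zero_add, ram_div_rad_mul hn, Matrix.smul_apply,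
      gram_vand_apply (rad_pos n) hξinj hξ, smul_eq_mul]
  · refine ram_eq_zero_of_not_dvd hn fun hdvd => hr (Fin.eq_of_intCast_dvd_sub ?_)
    exact (dvd_add_left (dvd_mul_right _ _)).1 hdvd

section CharpolyDet

variable {m : Type*} [Fintype m] [DecidableEq m]

theorem det_map_C_sub_smul_one_submatrix {R : Type*} [CommRing R] {l : Type*} [Fintype l]
    [DecidableEq l] (e : l ≃ m) (A : Matrix m m R) (Y : R[X]) :
    det ((A.submatrix e e).map C - Y • 1) = det (A.map C - Y • 1) := by
  have hsub : (A.submatrix e e).map C - Y • 1 = (A.map C - Y • 1).submatrix e e := by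
    ext i j
    simp [Matrix.one_apply]
  rw [hsub, det_submatrix_equiv_self]

theorem det_map_C_sub_smul_one_blockDiagonal_const {R : Type*} [CommRing R] {o : Type*}
    [Fintype o] [DecidableEq o] (A : Matrix m m R) (Y : R[X]) :
    det ((blockDiagonal fun _ : o => A).map C - Y • 1) =
      det (A.map C - Y • 1) ^ Fintype.card o := by
  rw [blockDiagonal_map _ _ (map_zero C), ← blockDiagonal_one, ← blockDiagonal_smul,
    ← blockDiagonal_sub, det_blockDiagonal]
  exact Finset.prod_const (det (A.map C - Y • 1))

theorem det_smul_map_C_sub_smul_one {K : Type*} [Field K] {c : K} (hc : c ≠ 0)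
    (A : Matrix m m K) (Y : K[X]) :
    det ((c • A).map C - Y • 1) = C c ^ Fintype.card m * det (A.map C - (C c⁻¹ * Y) • 1) := by
  have hfactor : (c • A).map C - Y • 1 = C c • (A.map C - (C c⁻¹ * Y) • 1) := by
    rw [smul_sub, smul_smul, ← mul_assoc, ← C_mul, mul_inv_cancel₀ hc, C_1, one_mul]
    ext i j
    simp
  rw [hfactor, det_smul]

end CharpolyDet

/-- For every positive integer `n`, with `n' = rad n`, `m = φ(n)`,
`m' = φ(n')` and `h = n / n'`, one has
`det(G_n - x • Id) = h ^ m * det(G_{n'} - (x/h) • Id) ^ h` as polynomials in `x`. -/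
theorem charpoly_gram_eq_pow_charpoly_gram_rad (n : ℕ) (hn : 0 < n)
    (ζ : Fin n.totient → ℂ) (hζinj : Function.Injective ζ)
    (hζ : ∀ i, IsPrimitiveRoot (ζ i) n)
    (ξ : Fin (rad n).totient → ℂ) (hξinj : Function.Injective ξ)
    (hξ : ∀ i, IsPrimitiveRoot (ξ i) (rad n)) :
    Matrix.det (((vand ζ)ᴴ * vand ζ).map Polynomial.C -
        (Polynomial.X : Polynomial ℂ) • (1 : Matrix (Fin n.totient) (Fin n.totient) (Polynomial ℂ)))
      = Polynomial.C (((n / rad n : ℕ) : ℂ)) ^ n.totient *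
        Matrix.det (((vand ξ)ᴴ * vand ξ).map Polynomial.C -
          (Polynomial.C (((n / rad n : ℕ) : ℂ))⁻¹ * Polynomial.X) •
            (1 : Matrix (Fin (rad n).totient) (Fin (rad n).totient) (Polynomial ℂ))) ^ (n / rad n) := by
  have hh : ((n / rad n : ℕ) : ℂ) ≠ 0 := Nat.cast_ne_zero.2 (div_rad_pos hn).ne'
  rw [← det_map_C_sub_smul_one_submatrix (totientRadEquiv n),
    gram_vand_submatrix_totientRadEquiv hn hζinj hζ hξinj hξ,
    det_map_C_sub_smul_one_blockDiagonal_const, det_smul_map_C_sub_smul_one hh, mul_pow,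
    ← pow_mul, Fintype.card_fin, Fintype.card_fin, ← totient_eq_totient_rad_mul]
end
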